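/- arXiv:1307.7800 — 2 statements merged into one kernel-verified Lean document; each statement's English description precedes it below -/
import Mathlib

section
/- The mean constraint can be linearized: for x ∈ {0,1}^n with Σᵢ xᵢ > 0, coordinates cᵢ ∈ ℝ², and bounds b⁻, b⁺ ∈ ℝ², one has b⁻ ≤ (Σᵢ cᵢxᵢ)/(Σᵢ xᵢ) ≤ b⁺ (componentwise) if and only if there exists y ∈ [0, b⁺₁ − b⁻₁] × [0, b⁺₂ − b⁻₂] such that Σᵢ (cᵢ − b⁻ − y) xᵢ = 0, where b⁻ ≤ b⁺ componentwise. -/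
/-- Linearization of the mean constraint: for a Boolean labelling `x`
with at least one foreground pixel, coordinates `c i ∈ ℝ²`, and bounds
`b⁻ ≤ b⁺` componentwise, the mean constraint
`b⁻ ≤ (Σ c i * x i)/(Σ x i) ≤ b⁺` holds iff there is a slack
`y ∈ [0, b⁺₁−b⁻₁] × [0, b⁺₂−b⁻₂]` with `Σᵢ (c i − b⁻ − y) * x i = 0`. -/
theorem mean_constraint_linearization
    (n : ℕ) (c : Fin n → Fin 2 → ℝ) (bminus bplus : Fin 2 → ℝ)
    (hb : ∀ k, bminus k ≤ bplus k) (x : Fin n → Bool)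
    (hpos : 0 < ∑ i, (if x i then (1:ℝ) else 0)) :
    (∀ k : Fin 2,
        bminus k ≤ (∑ i, c i k * (if x i then (1:ℝ) else 0)) /
            (∑ i, (if x i then (1:ℝ) else 0)) ∧
          (∑ i, c i k * (if x i then (1:ℝ) else 0)) /
            (∑ i, (if x i then (1:ℝ) else 0)) ≤ bplus k) ↔
      ∃ y : Fin 2 → ℝ, (∀ k, y k ∈ Set.Icc 0 (bplus k - bminus k)) ∧
        ∀ k, ∑ i, (c i k - bminus k - y k) * (if x i then (1:ℝ) else 0) = 0 := by
  set S : ℝ := ∑ i, (if x i then (1:ℝ) else 0) with hS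
  have hS0 : S ≠ 0 := ne_of_gt hpos
  have key : ∀ (k : Fin 2) (y : ℝ),
      (∑ i, (c i k - bminus k - y) * (if x i then (1:ℝ) else 0))
        = (∑ i, c i k * (if x i then (1:ℝ) else 0)) - (bminus k + y) * S := by
    intro k y
    rw [hS, Finset.mul_sum, ← Finset.sum_sub_distrib]
    apply Finset.sum_congr rfl
    intro i _
    ring
  constructor
  · intro h
    refine ⟨fun k => (∑ i, c i k * (if x i then (1:ℝ) else 0)) / S - bminus k,
      fun k => ?_, fun k => ?_⟩
    · exact ⟨by linarith [(h k).1], by linarith [(h k).2]⟩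
    · rw [key, add_sub_cancel, div_mul_cancel₀ _ hS0, sub_self]
  · rintro ⟨y, hy, heq⟩ k
    have h := heq k
    rw [key] at h
    have hmean : (∑ i, c i k * (if x i then (1:ℝ) else 0)) / S = bminus k + y k := by
      rw [div_eq_iff hS0]
      linarith
    rw [hmean]
    have := (hy k).1
    have := (hy k).2
    constructor <;> linarith
end

section
/- Monotonicity of the oracle solutions for a single size constraint: let E : {0,1}^n → ℝ be submodular, h(x) = Σᵢ xᵢ, and for λ ∈ ℝ let x_λ be the unique minimal (componentwise smallest) minimizer of E(x) + λ·h(x). Then λ ≤ λ' implies x_{λ'} ≤ x_λ componentwise. -/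
/-- Monotonicity of minimal minimizers for the parametric problem
`min E x + λ * Σ x i` with `E` submodular: if `λ ≤ λ'` and `x_λ`, `x_λ'` are the
(unique) componentwise-minimal minimizers at `λ` and `λ'`, then `x_λ' ≤ x_λ`. -/
theorem parametric_minimal_minimizers_antitone
    (n : ℕ) (E : (Fin n → Bool) → ℝ)
    (hE : ∀ x y : Fin n → Bool, E (x ⊔ y) + E (x ⊓ y) ≤ E x + E y)
    (lam lam' : ℝ) (hlam : lam ≤ lam')
    (x1 x2 : Fin n → Bool)
    (hx1min : ∀ x : Fin n → Bool,
      E x1 + lam * ∑ i, (if x1 i then (1:ℝ) else 0) ≤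
        E x + lam * ∑ i, (if x i then (1:ℝ) else 0))
    (hx1minimal : ∀ x : Fin n → Bool,
      (∀ y : Fin n → Bool,
        E x + lam * ∑ i, (if x i then (1:ℝ) else 0) ≤
          E y + lam * ∑ i, (if y i then (1:ℝ) else 0)) → x1 ≤ x)
    (hx2min : ∀ x : Fin n → Bool,
      E x2 + lam' * ∑ i, (if x2 i then (1:ℝ) else 0) ≤
        E x + lam' * ∑ i, (if x i then (1:ℝ) else 0))
    (hx2minimal : ∀ x : Fin n → Bool,
      (∀ y : Fin n → Bool,
        E x + lam' * ∑ i, (if x i then (1:ℝ) else 0) ≤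
          E y + lam' * ∑ i, (if y i then (1:ℝ) else 0)) → x2 ≤ x) :
    x2 ≤ x1 := by
  set h : (Fin n → Bool) → ℝ := fun x => ∑ i, (if x i then (1:ℝ) else 0) with hh
  have hmod : h (x1 ⊔ x2) + h (x1 ⊓ x2) = h x1 + h x2 := by
    simp only [hh, ← Finset.sum_add_distrib]
    refine Finset.sum_congr rfl fun i _ => ?_
    cases hx : x1 i <;> cases hy : x2 i <;>
      simp [Pi.sup_apply, Pi.inf_apply, hx, hy]
  have hmono : h x1 ≤ h (x1 ⊔ x2) := by
    refine Finset.sum_le_sum fun i _ => ?_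
    cases hx : x1 i <;> simp [Pi.sup_apply, hx] <;> split <;> norm_num
  have key : E (x1 ⊓ x2) + lam' * h (x1 ⊓ x2) ≤ E x2 + lam' * h x2 := by
    have h1 : E x1 + lam * h x1 ≤ E (x1 ⊔ x2) + lam * h (x1 ⊔ x2) := hx1min (x1 ⊔ x2)
    have h2 := hE x1 x2
    have hmod' : lam' * h (x1 ⊔ x2) + lam' * h (x1 ⊓ x2) = lam' * h x1 + lam' * h x2 := by
      linear_combination lam' * hmod
    nlinarith [mul_nonneg (sub_nonneg.mpr hlam) (sub_nonneg.mpr hmono)]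
  have hle : x2 ≤ x1 ⊓ x2 := hx2minimal (x1 ⊓ x2) fun y => key.trans (hx2min y)
  exact hle.trans inf_le_left
end
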